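/- arXiv:2308.00269 — 10 statements merged into one kernel-verified Lean document; each statement's English description precedes it below -/
import Mathlib

section
/- Let W : Fin p → ℝ have no ties (the map j ↦ |W_j| is injective on {j : W_j ≠ 0}), let q ∈ (0,1), and suppose the knockoff+ threshold τ₊ exists. Let σ be the decreasing rearrangement of W by magnitude and j* the index with |W_{σ(j*)}| = τ₊. If j* is not the last index, then −τ₊ < W_{σ(j*+1)} ≤ 0; that is, the ordered statistic immediately following the threshold is nonpositive and has magnitude strictly less than τ₊. -/
open Finset

/-- for the knockoff+ threshold `τ` (the minimum of the candidate set),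
with no ties in the magnitudes of the nonzero knockoff statistics and `σ` the decreasing
rearrangement of `W` by magnitude, the ordered statistic immediately after the index
`jstar` achieving `|W (σ jstar)| = τ` satisfies `-τ < W (σ (jstar+1)) ≤ 0`. -/
theorem knockoff_plus_next_ordered_statistic_nonpositive
    {p : ℕ} (W : Fin p → ℝ) (q : ℝ) (hq0 : 0 < q) (hq1 : q < 1)
    (noties : ∀ j k : Fin p, W j ≠ 0 → W k ≠ 0 → |W j| = |W k| → j = k)
    (τ : ℝ)
    (hmem : ∃ j : Fin p, W j ≠ 0 ∧ |W j| = τ)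
    (hτ : ((univ.filter fun j : Fin p => W j ≤ -τ).card : ℝ) + 1 ≤
      q * max ((univ.filter fun j : Fin p => τ ≤ W j).card : ℝ) 1)
    (hmin : ∀ t : ℝ, (∃ j : Fin p, W j ≠ 0 ∧ |W j| = t) →
      ((univ.filter fun j : Fin p => W j ≤ -t).card : ℝ) + 1 ≤
        q * max ((univ.filter fun j : Fin p => t ≤ W j).card : ℝ) 1 → τ ≤ t)
    (σ : Equiv.Perm (Fin p))
    (hσ : ∀ i k : Fin p, i ≤ k → |W (σ k)| ≤ |W (σ i)|)
    (jstar : Fin p) (hjstar : |W (σ jstar)| = τ)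
    (hsucc : (jstar : ℕ) + 1 < p) :
    -τ < W (σ ⟨(jstar : ℕ) + 1, hsucc⟩) ∧ W (σ ⟨(jstar : ℕ) + 1, hsucc⟩) ≤ 0 := by
  set j1 : Fin p := ⟨(jstar : ℕ) + 1, hsucc⟩ with hj1
  set s : ℝ := W (σ j1) with hs
  -- τ > 0
  obtain ⟨j0, hj0ne, hj0τ⟩ := hmem
  have hτpos : 0 < τ := hj0τ ▸ abs_pos.mpr hj0ne
  have hWjstar_ne : W (σ jstar) ≠ 0 := by
    intro h; rw [h, abs_zero] at hjstar; exact absurd hjstar.symm (ne_of_gt hτpos)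
  have hle : |s| ≤ τ := by
    have := hσ jstar j1 (by simp [hj1, Fin.le_def])
    rwa [hjstar] at this
  have hjne : jstar ≠ j1 := by
    intro h; have := congrArg Fin.val h; simp [hj1] at this
  have hlt : |s| < τ := by
    rcases eq_or_ne s 0 with h | h
    · rw [h, abs_zero]; exact hτpos
    · rcases lt_or_eq_of_le hle with h' | h'
      · exact h'
      · exfalso
        have := noties (σ j1) (σ jstar) h hWjstar_ne (by rw [h', hjstar])
        exact hjne (σ.injective this.symm)
  have hneg : -τ < s := (abs_lt.mp hlt).1
  refine ⟨hneg, ?_⟩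
  by_contra hpos
  push_neg at hpos
  have hsabs : |s| = s := abs_of_pos hpos
  have hsne : s ≠ 0 := ne_of_gt hpos
  -- no magnitude strictly between s and τ
  have key : ∀ j : Fin p, W j ≤ -s → W j ≤ -τ := by
    intro j hj
    have hWjneg : W j < 0 := lt_of_le_of_lt hj (by linarith)
    have habs : s ≤ |W j| := by rw [abs_of_neg hWjneg]; linarith
    have : τ ≤ |W j| := by
      set i := σ.symm j with hi
      have hji : j = σ i := by simp [hi]
      rcases le_or_gt i jstar with hcase | hcase
      · have := hσ i jstar hcase
        rw [hjstar] at this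
        calc τ ≤ |W (σ i)| := this
          _ = |W j| := by rw [hji]
      · have hij1 : j1 ≤ i := by
          rw [Fin.le_def]; simp [hj1]; rw [Fin.lt_def] at hcase; omega
        have h2 := hσ j1 i hij1
        have h3 : |W (σ i)| ≤ s := by rw [← hsabs]; exact h2
        rw [hji] at habs
        have heq : |W j| = s := by rw [hji]; exact le_antisymm h3 habs
        exfalso
        have := noties j (σ j1) (ne_of_lt hWjneg) hsne (by rw [heq, hsabs])
        rw [this] at hWjneg
        exact absurd hpos (not_lt.mpr (le_of_lt hWjneg))
    linarith [abs_of_neg hWjneg ▸ this]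
  -- s is a candidate
  have hcand : ((univ.filter fun j : Fin p => W j ≤ -s).card : ℝ) + 1 ≤
      q * max ((univ.filter fun j : Fin p => s ≤ W j).card : ℝ) 1 := by
    have hset : (univ.filter fun j : Fin p => W j ≤ -s) =
        (univ.filter fun j : Fin p => W j ≤ -τ) := by
      apply Finset.filter_congr
      intro j _
      constructor
      · exact key j
      · intro h; linarith
    have hsub : (univ.filter fun j : Fin p => τ ≤ W j) ⊆
        (univ.filter fun j : Fin p => s ≤ W j) := by
      intro j hj
      simp only [mem_filter, mem_univ, true_and] at hj ⊢
      linarith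
    have hcard : ((univ.filter fun j : Fin p => τ ≤ W j).card : ℝ) ≤
        ((univ.filter fun j : Fin p => s ≤ W j).card : ℝ) := by
      exact_mod_cast Finset.card_le_card hsub
    calc ((univ.filter fun j : Fin p => W j ≤ -s).card : ℝ) + 1
        = ((univ.filter fun j : Fin p => W j ≤ -τ).card : ℝ) + 1 := by rw [hset]
      _ ≤ q * max ((univ.filter fun j : Fin p => τ ≤ W j).card : ℝ) 1 := hτ
      _ ≤ q * max ((univ.filter fun j : Fin p => s ≤ W j).card : ℝ) 1 := by
          apply mul_le_mul_of_nonneg_left _ (le_of_lt hq0)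
          exact max_le_max hcard le_rfl
  have := hmin s ⟨σ j1, hsne, hsabs⟩ hcand
  rw [hsabs] at hlt
  linarith
end

section
/- Let W : Fin p → ℝ have no ties (the map j ↦ |W_j| is injective on {j : W_j ≠ 0}), let q ∈ (0,1), suppose the knockoff+ threshold τ₊ exists, let σ be the decreasing rearrangement of W by magnitude and j* the index with |W_{σ(j*)}| = τ₊, with j* not the last index. If 0 < W_{σ(j*+1)} < τ₊, then #{j : W_j ≤ −W_{σ(j*+1)}} + 1 ≤ q · max(#{j : W_j ≥ W_{σ(j*+1)}}, 1); in particular W_{σ(j*+1)} lies in the threshold candidate set and is strictly smaller than τ₊, contradicting the minimality of τ₊. -/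
open Finset

/-- if the ordered statistic following the threshold index were strictly
between `0` and `τ`, then `W (σ (jstar+1))` would satisfy the knockoff+ candidate
inequality, lie in the candidate set `{|W j| : W j ≠ 0}`, and be strictly smaller than
`τ`, contradicting the minimality of `τ`. -/
theorem knockoff_plus_smaller_threshold_candidate
    {p : ℕ} (W : Fin p → ℝ) (q : ℝ) (hq0 : 0 < q) (hq1 : q < 1)
    (noties : ∀ j k : Fin p, W j ≠ 0 → W k ≠ 0 → |W j| = |W k| → j = k)
    (τ : ℝ)
    (hmem : ∃ j : Fin p, W j ≠ 0 ∧ |W j| = τ)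
    (hτ : ((univ.filter fun j : Fin p => W j ≤ -τ).card : ℝ) + 1 ≤
      q * max ((univ.filter fun j : Fin p => τ ≤ W j).card : ℝ) 1)
    (hmin : ∀ t : ℝ, (∃ j : Fin p, W j ≠ 0 ∧ |W j| = t) →
      ((univ.filter fun j : Fin p => W j ≤ -t).card : ℝ) + 1 ≤
        q * max ((univ.filter fun j : Fin p => t ≤ W j).card : ℝ) 1 → τ ≤ t)
    (σ : Equiv.Perm (Fin p))
    (hσ : ∀ i k : Fin p, i ≤ k → |W (σ k)| ≤ |W (σ i)|)
    (jstar : Fin p) (hjstar : |W (σ jstar)| = τ)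
    (hsucc : (jstar : ℕ) + 1 < p)
    (hpos : 0 < W (σ ⟨(jstar : ℕ) + 1, hsucc⟩))
    (hlt : W (σ ⟨(jstar : ℕ) + 1, hsucc⟩) < τ) :
    (((univ.filter fun j : Fin p =>
          W j ≤ -(W (σ ⟨(jstar : ℕ) + 1, hsucc⟩))).card : ℝ) + 1 ≤
        q * max ((univ.filter fun j : Fin p =>
          W (σ ⟨(jstar : ℕ) + 1, hsucc⟩) ≤ W j).card : ℝ) 1) ∧
    (∃ j : Fin p, W j ≠ 0 ∧ |W j| = W (σ ⟨(jstar : ℕ) + 1, hsucc⟩)) ∧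
    W (σ ⟨(jstar : ℕ) + 1, hsucc⟩) < τ := by
  set i1 : Fin p := ⟨(jstar : ℕ) + 1, hsucc⟩ with hi1
  set t : ℝ := W (σ i1) with ht
  have htabs : |W (σ i1)| = t := abs_of_pos hpos
  have htne : W (σ i1) ≠ 0 := ne_of_gt hpos
  -- numerator sets are equal
  have hset : (univ.filter fun j : Fin p => W j ≤ -t) =
      (univ.filter fun j : Fin p => W j ≤ -τ) := by
    ext j
    simp only [mem_filter, mem_univ, true_and]
    constructor
    · intro hjt
      by_contra hjτ
      push_neg at hjτ
      have hjneg : W j < 0 := lt_of_le_of_lt hjt (by linarith)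
      have habs : |W j| = -W j := abs_of_neg hjneg
      have hlow : t ≤ |W j| := by rw [habs]; linarith
      have hhigh : |W j| < τ := by rw [habs]; linarith
      -- locate j via σ⁻¹
      set i : Fin p := σ.symm j with hi
      have hWj : W (σ i) = W j := by rw [hi]; simp
      have hgt : jstar < i := by
        by_contra h
        push_neg at h
        have := hσ i jstar h
        rw [hWj, hjstar] at this
        linarith
      have hle : i1 ≤ i := by
        have : (jstar : ℕ) + 1 ≤ (i : ℕ) := hgt
        exact this
      have : |W (σ i)| ≤ |W (σ i1)| := hσ i1 i hle
      rw [hWj, htabs] at this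
      have heq : |W j| = |W (σ i1)| := by rw [htabs]; linarith
      have hjne : W j ≠ 0 := ne_of_lt hjneg
      have := noties j (σ i1) hjne htne heq
      rw [this] at hjneg
      linarith
    · intro h; linarith
  -- denominator grows
  have hsub : (univ.filter fun j : Fin p => τ ≤ W j) ⊆
      (univ.filter fun j : Fin p => t ≤ W j) := by
    intro j hj
    simp only [mem_filter, mem_univ, true_and] at hj ⊢
    linarith
  have hcard : ((univ.filter fun j : Fin p => τ ≤ W j).card : ℝ) ≤
      ((univ.filter fun j : Fin p => t ≤ W j).card : ℝ) := by
    exact_mod_cast Finset.card_le_card hsub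
  refine ⟨?_, ⟨σ i1, htne, htabs⟩, hlt⟩
  calc ((univ.filter fun j : Fin p => W j ≤ -t).card : ℝ) + 1
      = ((univ.filter fun j : Fin p => W j ≤ -τ).card : ℝ) + 1 := by rw [hset]
    _ ≤ q * max ((univ.filter fun j : Fin p => τ ≤ W j).card : ℝ) 1 := hτ
    _ ≤ q * max ((univ.filter fun j : Fin p => t ≤ W j).card : ℝ) 1 := by
        apply mul_le_mul_of_nonneg_left _ (le_of_lt hq0)
        exact max_le_max hcard le_rfl
end

section
/- Let a, ã, β₀ : Fin p → ℝ, W_j = |a_j| − |ã_j|, S₀ = {j : β₀_j ≠ 0}, s₀ = |S₀|, and assume the ℓ1-error bound Σ_{j=1}^p (|a_j − β₀_j| + |ã_j|) ≤ C_{ℓ1} λ s₀ with C_{ℓ1}, λ > 0. Let q ∈ (0,1) and c > 0 satisfy q·c·s₀ > 2. If τ > 0 satisfies #{j : W_j ≤ −τ} ≥ q·c·s₀ − 2, then τ ≤ C_{ℓ1} λ s₀ / (q·c·s₀ − 2). -/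
open Finset

/-- under the ℓ1-error bound `∑ j (|a j - β₀ j| + |ã j|) ≤ C_{ℓ1} λ s₀`,
if `q·c·s₀ > 2` and `τ > 0` satisfies `#{j : W j ≤ -τ} ≥ q·c·s₀ - 2`, then
`τ ≤ C_{ℓ1} λ s₀ / (q·c·s₀ - 2)`. -/
theorem knockoff_threshold_upper_bound
    {p : ℕ} (hp : 1 ≤ p) (a atk β₀ : Fin p → ℝ)
    (s₀ : ℝ) (hs₀ : s₀ = ((univ.filter fun j : Fin p => β₀ j ≠ 0).card : ℝ))
    (Cl1 lam q c : ℝ) (hCl1 : 0 < Cl1) (hlam : 0 < lam)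
    (hq0 : 0 < q) (hq1 : q < 1) (hc : 0 < c)
    (hl1 : ∑ j, (|a j - β₀ j| + |atk j|) ≤ Cl1 * lam * s₀)
    (hqc : 2 < q * c * s₀)
    (τ : ℝ) (hτ : 0 < τ)
    (hcount : q * c * s₀ - 2 ≤
      ((univ.filter fun j : Fin p => |a j| - |atk j| ≤ -τ).card : ℝ)) :
    τ ≤ Cl1 * lam * s₀ / (q * c * s₀ - 2) := by
  set S := univ.filter fun j : Fin p => |a j| - |atk j| ≤ -τ with hS
  have hpos : 0 < q * c * s₀ - 2 := by linarith
  rw [le_div_iff₀ hpos]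
  have h1 : τ * (q * c * s₀ - 2) ≤ τ * (S.card : ℝ) :=
    mul_le_mul_of_nonneg_left hcount hτ.le
  have h2 : τ * (S.card : ℝ) ≤ ∑ j ∈ S, (|a j - β₀ j| + |atk j|) := by
    rw [mul_comm, ← nsmul_eq_mul, ← Finset.sum_const]
    apply Finset.sum_le_sum
    intro j hj
    rw [hS, Finset.mem_filter] at hj
    have := abs_nonneg (a j - β₀ j)
    have := abs_nonneg (a j)
    linarith [hj.2]
  have h3 : ∑ j ∈ S, (|a j - β₀ j| + |atk j|) ≤ ∑ j, (|a j - β₀ j| + |atk j|) := by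
    apply Finset.sum_le_sum_of_subset_of_nonneg (Finset.subset_univ S)
    intro j _ _
    positivity
  linarith
end

section
/- Let a, ã, β₀ : Fin p → ℝ, W_j = |a_j| − |ã_j|, S₀ = {j : β₀_j ≠ 0}, s₀ = |S₀| ≥ 1, and assume: (i) the ℓ1-error bound Σ_{j=1}^p (|a_j − β₀_j| + |ã_j|) ≤ C_{ℓ1} λ s₀; (ii) min_{j ∈ S₀} |β₀_j| ≥ κλ/C_λ; where λ, κ, C_λ, C_{ℓ1} > 0. Let τ be a real number with 0 < τ ≤ κλ/(C_λ φ), where φ = (1+√5)/2 is the golden ratio, and set Ŝ₀ = {j : W_j ≥ τ}. Then #(Ŝ₀ ∩ S₀) > (1 − C_{ℓ1} C_λ φ / (κ(φ − 1))) · s₀. -/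
open Finset

/-- Case 1 of the power analysis: under the ℓ1-error bound and the
signal-strength condition `min_{j ∈ S₀} |β₀ j| ≥ κλ/C_λ`, if the threshold satisfies
`0 < τ ≤ κλ/(C_λ φ)` with `φ = (1+√5)/2` the golden ratio, then the selected set
`Ŝ₀ = {j : W j ≥ τ}` satisfies `#(Ŝ₀ ∩ S₀) > (1 - C_{ℓ1} C_λ φ/(κ(φ-1))) s₀`. -/
theorem power_case1_lower_bound
    {p : ℕ} (hp : 1 ≤ p) (a atk β₀ : Fin p → ℝ)
    (S₀ : Finset (Fin p)) (hS₀ : S₀ = univ.filter fun j : Fin p => β₀ j ≠ 0)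
    (s₀ : ℝ) (hs₀ : s₀ = (S₀.card : ℝ)) (hs₀1 : 1 ≤ s₀)
    (lam κ Clam Cl1 : ℝ) (hlam : 0 < lam) (hκ : 0 < κ)
    (hClam : 0 < Clam) (hCl1 : 0 < Cl1)
    (hl1 : ∑ j, (|a j - β₀ j| + |atk j|) ≤ Cl1 * lam * s₀)
    (hsignal : ∀ j ∈ S₀, κ * lam / Clam ≤ |β₀ j|)
    (τ : ℝ) (hτ0 : 0 < τ) (hτ : τ ≤ κ * lam / (Clam * ((1 + Real.sqrt 5) / 2)))
    (Shat : Finset (Fin p))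
    (hShat : Shat = univ.filter fun j : Fin p => τ ≤ |a j| - |atk j|) :
    (1 - Cl1 * Clam * ((1 + Real.sqrt 5) / 2) /
        (κ * ((1 + Real.sqrt 5) / 2 - 1))) * s₀ < ((Shat ∩ S₀).card : ℝ) := by
  have h5 : (1 : ℝ) < Real.sqrt 5 := by
    nlinarith [Real.sq_sqrt (by norm_num : (0:ℝ) ≤ 5), Real.sqrt_nonneg 5]
  set φ : ℝ := (1 + Real.sqrt 5) / 2 with hφdef
  have hφ1 : 1 < φ := by rw [hφdef]; linarith
  have hφ0 : 0 < φ := by linarith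
  have hB : 0 < κ * (φ - 1) := mul_pos hκ (by linarith)
  have hA : 0 < Clam * φ := by positivity
  -- τ * (Clam * φ) ≤ κ * lam
  have hτκ : τ * (Clam * φ) ≤ κ * lam := (le_div_iff₀ hA).mp hτ
  set c : ℝ := κ * lam / Clam - τ with hcdef
  have hcA : lam * (κ * (φ - 1)) ≤ c * (Clam * φ) := by
    have : κ * lam / Clam * Clam = κ * lam := by field_simp
    rw [hcdef]; nlinarith
  set M : Finset (Fin p) := S₀ \ Shat with hMdef
  have hcard : ((Shat ∩ S₀).card : ℝ) + (M.card : ℝ) = s₀ := by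
    rw [hs₀, hMdef, Finset.inter_comm]
    norm_cast
    exact Finset.card_inter_add_card_sdiff S₀ Shat
  have hterm : ∀ j ∈ M, c < |a j - β₀ j| + |atk j| := by
    intro j hj
    rw [hMdef, Finset.mem_sdiff] at hj
    obtain ⟨hj1, hj2⟩ := hj
    have hW : |a j| - |atk j| < τ := by
      by_contra h
      exact hj2 (by rw [hShat]; exact Finset.mem_filter.mpr ⟨Finset.mem_univ _, le_of_not_gt h⟩)
    have hsig := hsignal j hj1
    have habs : |β₀ j| - |a j| ≤ |a j - β₀ j| := by
      have := abs_sub_abs_le_abs_sub (β₀ j) (a j)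
      rwa [abs_sub_comm] at this
    rw [hcdef]; linarith
  have hnn : ∀ j, 0 ≤ |a j - β₀ j| + |atk j| := fun j => by positivity
  by_cases hne : M.Nonempty
  · have hsum1 : (M.card : ℝ) * c < ∑ j ∈ M, (|a j - β₀ j| + |atk j|) := by
      have := Finset.sum_lt_sum_of_nonempty hne hterm
      simpa [Finset.sum_const, nsmul_eq_mul] using this
    have hsum2 : ∑ j ∈ M, (|a j - β₀ j| + |atk j|) ≤ ∑ j, (|a j - β₀ j| + |atk j|) :=
      Finset.sum_le_sum_of_subset_of_nonneg (Finset.subset_univ _) (fun j _ _ => hnn j)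
    have hmc : (M.card : ℝ) * c < Cl1 * lam * s₀ := by linarith
    have hm0 : (0:ℝ) ≤ (M.card : ℝ) := Nat.cast_nonneg _
    have key : (M.card : ℝ) < Cl1 * Clam * φ / (κ * (φ - 1)) * s₀ := by
      rw [div_mul_eq_mul_div, lt_div_iff₀ hB]
      nlinarith [mul_le_mul_of_nonneg_left hcA hm0]
    nlinarith [key, hcard]
  · have hM0 : (M.card : ℝ) = 0 := by
      rw [Finset.not_nonempty_iff_eq_empty] at hne
      rw [hne]; simp
    have hpos : 0 < Cl1 * Clam * φ / (κ * (φ - 1)) := div_pos (by positivity) hB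
    nlinarith [hcard, hM0, hpos]
end

section
/- Let a, ã, β₀ : Fin p → ℝ, S₀ = {j : β₀_j ≠ 0}, s₀ = |S₀|, and assume the ℓ1-error bound Σ_{j=1}^p (|a_j − β₀_j| + |ã_j|) ≤ C_{ℓ1} λ s₀ and the signal-strength condition min_{j ∈ S₀} |β₀_j| ≥ κλ/C_λ, with λ, κ, C_λ, C_{ℓ1} > 0. Then the number of relevant coordinates killed by the Lasso satisfies #{j ∈ S₀ : a_j = 0} ≤ C_{ℓ1} C_λ κ⁻¹ s₀. -/
open Finset

/-- under the ℓ1-error bound and the signal-strength condition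
`min_{j ∈ S₀} |β₀ j| ≥ κλ/C_λ`, the number of relevant coordinates killed by the Lasso
satisfies `#{j ∈ S₀ : a j = 0} ≤ C_{ℓ1} C_λ κ⁻¹ s₀`. -/
theorem killed_relevant_coordinates_bound
    {p : ℕ} (hp : 1 ≤ p) (a atk β₀ : Fin p → ℝ)
    (S₀ : Finset (Fin p)) (hS₀ : S₀ = univ.filter fun j : Fin p => β₀ j ≠ 0)
    (s₀ : ℝ) (hs₀ : s₀ = (S₀.card : ℝ))
    (lam κ Clam Cl1 : ℝ) (hlam : 0 < lam) (hκ : 0 < κ)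
    (hClam : 0 < Clam) (hCl1 : 0 < Cl1)
    (hl1 : ∑ j, (|a j - β₀ j| + |atk j|) ≤ Cl1 * lam * s₀)
    (hsignal : ∀ j ∈ S₀, κ * lam / Clam ≤ |β₀ j|) :
    ((S₀.filter fun j : Fin p => a j = 0).card : ℝ) ≤ Cl1 * Clam * κ⁻¹ * s₀ := by
  set T := S₀.filter fun j : Fin p => a j = 0 with hT
  have key : (T.card : ℝ) * (κ * lam / Clam) ≤ Cl1 * lam * s₀ := by
    calc (T.card : ℝ) * (κ * lam / Clam)
        = ∑ _j ∈ T, (κ * lam / Clam) := by rw [Finset.sum_const, nsmul_eq_mul]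
      _ ≤ ∑ j ∈ T, (|a j - β₀ j| + |atk j|) := by
          apply Finset.sum_le_sum
          intro j hj
          rw [Finset.mem_filter] at hj
          have h1 := hsignal j hj.1
          have h2 : |a j - β₀ j| = |β₀ j| := by rw [hj.2, zero_sub, abs_neg]
          have := abs_nonneg (atk j)
          linarith [h1, h2]
      _ ≤ ∑ j, (|a j - β₀ j| + |atk j|) := by
          apply Finset.sum_le_sum_of_subset_of_nonneg (Finset.subset_univ T)
          intro i _ _
          positivity
      _ ≤ Cl1 * lam * s₀ := hl1
  rw [div_eq_mul_inv, ← mul_assoc] at key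
  have hinv : (0:ℝ) < Clam⁻¹ := by positivity
  -- from card * κ * lam * Clam⁻¹ ≤ Cl1 * lam * s₀ deduce the goal
  have h2 : (T.card : ℝ) ≤ Cl1 * Clam * κ⁻¹ * s₀ := by
    have hkey : (T.card : ℝ) * (κ * lam * Clam⁻¹) ≤ Cl1 * lam * s₀ := by
      rw [← mul_assoc]; exact key
    rw [← le_div_iff₀ (by positivity : (0:ℝ) < κ * lam * Clam⁻¹)] at hkey
    calc (T.card : ℝ) ≤ Cl1 * lam * s₀ / (κ * lam * Clam⁻¹) := hkey
      _ = Cl1 * Clam * κ⁻¹ * s₀ := by field_simp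
  exact h2
end

section
/- Let a, ã, β₀ : Fin p → ℝ, W_j = |a_j| − |ã_j|, S₀ = {j : β₀_j ≠ 0}, s₀ = |S₀|, and assume the ℓ1-error bound Σ_{j=1}^p (|a_j − β₀_j| + |ã_j|) ≤ C_{ℓ1} λ s₀ and min_{j ∈ S₀} |β₀_j| ≥ κλ/C_λ, with λ, κ, C_λ, C_{ℓ1} > 0. If moreover a_j ≠ 0 implies W_j ≠ 0 for every j (no ties among the nonzero Lasso coefficients), then #{j ∈ S₀ : W_j ≠ 0} ≥ (1 − C_{ℓ1} C_λ κ⁻¹) · s₀. -/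
/-!
A relevant index `j ∈ S₀` with `W j = 0` has `a j = 0` by the no-tie assumption, so it contributes
at least `|β₀ j| ≥ κ λ / C_λ` to the ℓ1 error. Markov's inequality then bounds the number of missed
relevant indices by `C_{ℓ1} C_λ κ⁻¹ s₀`.
-/

open Finset

theorem Finset.one_sub_mul_card_le_card_filter {ι : Type*} (s : Finset ι) (P : ι → Prop)
    [DecidablePred P] {c : ℝ} (h : (#(s.filter fun j => ¬ P j) : ℝ) ≤ c * #s) :
    (1 - c) * #s ≤ #(s.filter P) := by
  have hsplit : (#(s.filter P) : ℝ) + #(s.filter fun j => ¬ P j) = #s := by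
    exact_mod_cast card_filter_add_card_filter_not P
  linarith

theorem abs_le_abs_sub_add_abs_of_eq_zero {x y z : ℝ} (hx : x = 0) : |y| ≤ |x - y| + |z| := by
  rw [hx, zero_sub, abs_neg]
  exact le_add_of_nonneg_right (abs_nonneg z)

theorem threshold_mul_card_tied_le_l1Error {p : ℕ} (a atk β₀ W : Fin p → ℝ) (S₀ : Finset (Fin p))
    {t : ℝ} (hsignal : ∀ j ∈ S₀, t ≤ |β₀ j|) (hsupp : ∀ j, a j ≠ 0 → W j ≠ 0) :
    t * #(S₀.filter fun j => ¬ W j ≠ 0) ≤ ∑ j, (|a j - β₀ j| + |atk j|) := by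
  have hterm : ∀ j ∈ S₀.filter fun j => ¬ W j ≠ 0, t ≤ |a j - β₀ j| + |atk j| := by
    intro j hj
    obtain ⟨hjS, hjW⟩ := mem_filter.mp hj
    have ha : a j = 0 := by_contra fun h => hjW (hsupp j h)
    exact (hsignal j hjS).trans (abs_le_abs_sub_add_abs_of_eq_zero ha)
  calc t * #(S₀.filter fun j => ¬ W j ≠ 0)
      = #(S₀.filter fun j => ¬ W j ≠ 0) • t := by rw [nsmul_eq_mul, mul_comm]
    _ ≤ ∑ j ∈ S₀.filter fun j => ¬ W j ≠ 0, (|a j - β₀ j| + |atk j|) := card_nsmul_le_sum _ _ _ hterm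
    _ ≤ ∑ j, (|a j - β₀ j| + |atk j|) :=
        sum_le_sum_of_subset_of_nonneg (subset_univ _) fun j _ _ => by positivity

theorem support_of_W_covers_relevant_general
    {p : ℕ} (a atk β₀ : Fin p → ℝ)
    (W : Fin p → ℝ)
    (S₀ : Finset (Fin p))
    (s₀ : ℝ) (hs₀ : s₀ = (S₀.card : ℝ))
    (lam κ Clam Cl1 : ℝ) (hlam : 0 < lam) (hκ : 0 < κ)
    (hClam : 0 < Clam)
    (hl1 : ∑ j, (|a j - β₀ j| + |atk j|) ≤ Cl1 * lam * s₀)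
    (hsignal : ∀ j ∈ S₀, κ * lam / Clam ≤ |β₀ j|)
    (hsupp : ∀ j : Fin p, a j ≠ 0 → W j ≠ 0) :
    (1 - Cl1 * Clam * κ⁻¹) * s₀ ≤ ((S₀.filter fun j : Fin p => W j ≠ 0).card : ℝ) := by
  subst hs₀
  apply one_sub_mul_card_le_card_filter
  have hmissed := (threshold_mul_card_tied_le_l1Error a atk β₀ W S₀ hsignal hsupp).trans hl1
  have hthreshold : 0 < κ * lam / Clam := by positivity
  calc (#(S₀.filter fun j => ¬ W j ≠ 0) : ℝ) ≤ Cl1 * lam * #S₀ / (κ * lam / Clam) := by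
        rw [le_div_iff₀ hthreshold, mul_comm]; exact hmissed
    _ = Cl1 * Clam * κ⁻¹ * #S₀ := by field_simp

/-- under the ℓ1-error bound and the signal-strength condition, if
`a j ≠ 0` implies `W j ≠ 0` for every `j` (no ties among the nonzero Lasso
coefficients), then `#{j ∈ S₀ : W j ≠ 0} ≥ (1 - C_{ℓ1} C_λ κ⁻¹) s₀`, where
`W j = |a j| - |ã j|`. -/
theorem support_of_W_covers_relevant
    {p : ℕ} (hp : 1 ≤ p) (a atk β₀ : Fin p → ℝ)
    (W : Fin p → ℝ) (hW : ∀ j, W j = |a j| - |atk j|)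
    (S₀ : Finset (Fin p)) (hS₀ : S₀ = univ.filter fun j : Fin p => β₀ j ≠ 0)
    (s₀ : ℝ) (hs₀ : s₀ = (S₀.card : ℝ))
    (lam κ Clam Cl1 : ℝ) (hlam : 0 < lam) (hκ : 0 < κ)
    (hClam : 0 < Clam) (hCl1 : 0 < Cl1)
    (hl1 : ∑ j, (|a j - β₀ j| + |atk j|) ≤ Cl1 * lam * s₀)
    (hsignal : ∀ j ∈ S₀, κ * lam / Clam ≤ |β₀ j|)
    (hsupp : ∀ j : Fin p, a j ≠ 0 → W j ≠ 0) :
    (1 - Cl1 * Clam * κ⁻¹) * s₀ ≤ ((S₀.filter fun j : Fin p => W j ≠ 0).card : ℝ) :=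
  support_of_W_covers_relevant_general a atk β₀ W S₀ s₀ hs₀ lam κ Clam Cl1 hlam hκ hClam hl1 hsignal
    hsupp
end

section
/- Let a, ã, β₀ : Fin p → ℝ, W_j = |a_j| − |ã_j|, S₀ = {j : β₀_j ≠ 0}, s₀ = |S₀| ≥ 1, and assume the ℓ1-error bound Σ_{j=1}^p (|a_j − β₀_j| + |ã_j|) ≤ C_{ℓ1} λ s₀ with λ, κ, C_λ, C_{ℓ1} > 0. Let τ₊ > 0 be such that every j with W_j < 0 satisfies W_j ≤ −τ₊, and suppose #{j : W_j < 0} > φ C_{ℓ1} C_λ κ⁻¹ s₀, where φ = (1+√5)/2 is the golden ratio. Then τ₊ < κλ/(C_λ φ). -/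
open Finset

/-! Every `j` with `W j < 0` has `τ₊ ≤ |ã_j| ≤ |a_j - β₀_j| + |ã_j|`, so the number of negative
statistics times `τ₊` is at most the ℓ1 error `C_{ℓ1} λ s₀`; comparing with the assumed lower
bound on that number bounds `τ₊`. -/

theorem card_filter_mul_le_sum {ι : Type*} [Fintype ι] (P : ι → Prop) [DecidablePred P]
    (f : ι → ℝ) (hf : ∀ j, 0 ≤ f j) (τ : ℝ) (hτ : ∀ j, P j → τ ≤ f j) :
    (#(univ.filter P) : ℝ) * τ ≤ ∑ j, f j := by
  calc (#(univ.filter P) : ℝ) * τ = #(univ.filter P) • τ := (nsmul_eq_mul _ _).symm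
    _ ≤ ∑ j ∈ univ.filter P, f j :=
        card_nsmul_le_sum _ _ _ fun j hj => hτ j (mem_filter.mp hj).2
    _ ≤ ∑ j, f j := sum_le_sum_of_subset_of_nonneg (subset_univ _) fun j _ _ => hf j

theorem le_abs_sub_add_abs_of_abs_sub_abs_le_neg {x y b τ : ℝ} (h : |x| - |y| ≤ -τ) :
    τ ≤ |x - b| + |y| := by
  linarith [abs_nonneg x, abs_nonneg (x - b)]

theorem mul_lt_of_mul_le_mul_of_mul_lt {N τ c B s : ℝ} (hτ : 0 < τ) (hs : 0 < s)
    (hbudget : N * τ ≤ B * s) (hcount : c * s < N) : τ * c < B := by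
  have : τ * c * s < B * s := by nlinarith
  exact lt_of_mul_lt_mul_right this hs.le

theorem threshold_small_when_many_negative_general
    {p : ℕ} (a atk β₀ : Fin p → ℝ)
    (W : Fin p → ℝ) (hW : ∀ j, W j = |a j| - |atk j|)
    (s₀ : ℝ) (hs₀1 : 1 ≤ s₀)
    (lam κ Clam Cl1 : ℝ) (hκ : 0 < κ)
    (hClam : 0 < Clam) (hCl1 : 0 < Cl1)
    (hl1 : ∑ j, (|a j - β₀ j| + |atk j|) ≤ Cl1 * lam * s₀)
    (τ : ℝ) (hτ0 : 0 < τ)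
    (hτneg : ∀ j : Fin p, W j < 0 → W j ≤ -τ)
    (hcount : ((1 + Real.sqrt 5) / 2) * Cl1 * Clam * κ⁻¹ * s₀ <
      ((univ.filter fun j : Fin p => W j < 0).card : ℝ)) :
    τ < κ * lam / (Clam * ((1 + Real.sqrt 5) / 2)) := by
  set φ : ℝ := (1 + Real.sqrt 5) / 2
  have hφ : 0 < φ := by positivity
  have hbudget : (#(univ.filter fun j => W j < 0) : ℝ) * τ ≤ Cl1 * lam * s₀ :=
    (card_filter_mul_le_sum _ _ (fun j => by positivity) τ fun j hj =>
      le_abs_sub_add_abs_of_abs_sub_abs_le_neg (hW j ▸ hτneg j hj)).trans hl1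
  have key := mul_lt_of_mul_le_mul_of_mul_lt hτ0 (by linarith) hbudget hcount
  rw [lt_div_iff₀ (by positivity)]
  have : τ * (Clam * φ) * (Cl1 * κ⁻¹) < κ * lam * (Cl1 * κ⁻¹) := by
    convert key using 1 <;> field_simp
  exact lt_of_mul_lt_mul_right this (by positivity)

/-- under the ℓ1-error bound, if `τ₊ > 0` is such that every `j` with
`W j < 0` satisfies `W j ≤ -τ₊`, and `#{j : W j < 0} > φ C_{ℓ1} C_λ κ⁻¹ s₀` with
`φ = (1+√5)/2` the golden ratio, then `τ₊ < κλ/(C_λ φ)`. -/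
theorem threshold_small_when_many_negative
    {p : ℕ} (hp : 1 ≤ p) (a atk β₀ : Fin p → ℝ)
    (W : Fin p → ℝ) (hW : ∀ j, W j = |a j| - |atk j|)
    (S₀ : Finset (Fin p)) (hS₀ : S₀ = univ.filter fun j : Fin p => β₀ j ≠ 0)
    (s₀ : ℝ) (hs₀ : s₀ = (S₀.card : ℝ)) (hs₀1 : 1 ≤ s₀)
    (lam κ Clam Cl1 : ℝ) (hlam : 0 < lam) (hκ : 0 < κ)
    (hClam : 0 < Clam) (hCl1 : 0 < Cl1)
    (hl1 : ∑ j, (|a j - β₀ j| + |atk j|) ≤ Cl1 * lam * s₀)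
    (τ : ℝ) (hτ0 : 0 < τ)
    (hτneg : ∀ j : Fin p, W j < 0 → W j ≤ -τ)
    (hcount : ((1 + Real.sqrt 5) / 2) * Cl1 * Clam * κ⁻¹ * s₀ <
      ((univ.filter fun j : Fin p => W j < 0).card : ℝ)) :
    τ < κ * lam / (Clam * ((1 + Real.sqrt 5) / 2)) :=
  threshold_small_when_many_negative_general a atk β₀ W hW s₀ hs₀1 lam κ Clam Cl1 hκ hClam hCl1 hl1
    τ hτ0 hτneg hcount
end

section
/- Let a, ã, β₀ : Fin p → ℝ, W_j = |a_j| − |ã_j|, S₀ = {j : β₀_j ≠ 0}, s₀ = |S₀|, and assume: (i) the ℓ1-error bound Σ_{j=1}^p (|a_j − β₀_j| + |ã_j|) ≤ C_{ℓ1} λ s₀; (ii) min_{j ∈ S₀} |β₀_j| ≥ κλ/C_λ; (iii) a_j ≠ 0 implies W_j ≠ 0 for every j; (iv) #{j : W_j < 0} ≤ φ C_{ℓ1} C_λ κ⁻¹ s₀, where φ = (1+√5)/2 is the golden ratio; with λ, κ, C_λ, C_{ℓ1} > 0. Then, with Ŝ₀ = {j : W_j > 0}, one has #(Ŝ₀ ∩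 S₀) ≥ (1 − C_{ℓ1} C_λ (φ + 1) κ⁻¹) · s₀. -/
/-!
A true signal `j ∈ S₀` is missed only if `W j < 0` or `W j = 0`. The first kind is counted by
the hypothesis on `#{j : W j < 0}`. For the second kind the no-ties condition forces `a j = 0`,
so the whole signal `|β₀ j| ≥ κλ/C_λ` shows up in the ℓ1-error, which caps their number at
`C_{ℓ1} C_λ κ⁻¹ s₀`.
-/

open Finset

section

variable {ι : Type*} [Fintype ι]

lemma card_le_card_pos_inter_add_card_neg_add_card_zero [DecidableEq ι] (S : Finset ι)
    (W : ι → ℝ) :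
    #S ≤ #(univ.filter (fun j => 0 < W j) ∩ S) + #(univ.filter fun j => W j < 0) +
      #(S.filter fun j => W j = 0) := by
  have hcover : S ⊆ (univ.filter (fun j => 0 < W j) ∩ S) ∪ (univ.filter fun j => W j < 0) ∪
      S.filter fun j => W j = 0 := by
    intro j hj
    rcases lt_trichotomy (W j) 0 with h | h | h <;> simp [hj, h]
  exact (card_le_card hcover).trans <|
    (card_union_le _ _).trans (Nat.add_le_add_right (card_union_le _ _) _)

lemma card_mul_le_sum_abs_sub_add_abs (a atk β₀ : ι → ℝ) (T : Finset ι) {m : ℝ}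
    (ha : ∀ j ∈ T, a j = 0) (hm : ∀ j ∈ T, m ≤ |β₀ j|) :
    (#T : ℝ) * m ≤ ∑ j, (|a j - β₀ j| + |atk j|) := by
  have hterm : ∀ j ∈ T, m ≤ |a j - β₀ j| + |atk j| := fun j hj => by
    rw [ha j hj, zero_sub, abs_neg]
    linarith [hm j hj, abs_nonneg (atk j)]
  calc (#T : ℝ) * m = #T • m := (nsmul_eq_mul _ _).symm
    _ ≤ ∑ j ∈ T, (|a j - β₀ j| + |atk j|) := card_nsmul_le_sum _ _ _ hterm
    _ ≤ ∑ j, (|a j - β₀ j| + |atk j|) :=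
      sum_le_sum_of_subset_of_nonneg (subset_univ T) fun j _ _ => by positivity

end

theorem power_case2_lower_bound_general
    {p : ℕ} (a atk β₀ : Fin p → ℝ)
    (W : Fin p → ℝ)
    (S₀ : Finset (Fin p))
    (s₀ : ℝ) (hs₀ : s₀ = (S₀.card : ℝ))
    (lam κ Clam Cl1 : ℝ) (hlam : 0 < lam) (hκ : 0 < κ)
    (hClam : 0 < Clam)
    (hl1 : ∑ j, (|a j - β₀ j| + |atk j|) ≤ Cl1 * lam * s₀)
    (hsignal : ∀ j ∈ S₀, κ * lam / Clam ≤ |β₀ j|)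
    (hsupp : ∀ j : Fin p, a j ≠ 0 → W j ≠ 0)
    (hneg : ((univ.filter fun j : Fin p => W j < 0).card : ℝ) ≤
      ((1 + Real.sqrt 5) / 2) * Cl1 * Clam * κ⁻¹ * s₀)
    (Shat : Finset (Fin p))
    (hShat : Shat = univ.filter fun j : Fin p => 0 < W j) :
    (1 - Cl1 * Clam * ((1 + Real.sqrt 5) / 2 + 1) * κ⁻¹) * s₀ ≤
      ((Shat ∩ S₀).card : ℝ) := by
  set Z := S₀.filter fun j => W j = 0
  have hsplit : s₀ ≤ #(Shat ∩ S₀) + #(univ.filter fun j => W j < 0) + #Z := by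
    rw [hs₀, hShat]
    exact_mod_cast card_le_card_pos_inter_add_card_neg_add_card_zero S₀ W
  have hZ_mul : (#Z : ℝ) * (κ * lam / Clam) ≤ Cl1 * lam * s₀ :=
    (card_mul_le_sum_abs_sub_add_abs a atk β₀ Z
      (fun j hj => not_not.mp fun ha => hsupp j ha (mem_filter.mp hj).2)
      (fun j hj => hsignal j (mem_filter.mp hj).1)).trans hl1
  have hZ : (#Z : ℝ) ≤ Cl1 * Clam * κ⁻¹ * s₀ := by
    rw [← le_div_iff₀ (by positivity)] at hZ_mul
    calc (#Z : ℝ) ≤ Cl1 * lam * s₀ / (κ * lam / Clam) := hZ_mul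
      _ = Cl1 * Clam * κ⁻¹ * s₀ := by field_simp
  linarith

/-- Case 2 of the power analysis: under the ℓ1-error bound, the
signal-strength condition, the no-ties condition `a j ≠ 0 → W j ≠ 0`, and the bound
`#{j : W j < 0} ≤ φ C_{ℓ1} C_λ κ⁻¹ s₀` with `φ = (1+√5)/2` the golden ratio, the
selected set `Ŝ₀ = {j : W j > 0}` satisfies
`#(Ŝ₀ ∩ S₀) ≥ (1 - C_{ℓ1} C_λ (φ+1) κ⁻¹) s₀`. -/
theorem power_case2_lower_bound
    {p : ℕ} (hp : 1 ≤ p) (a atk β₀ : Fin p → ℝ)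
    (W : Fin p → ℝ) (hW : ∀ j, W j = |a j| - |atk j|)
    (S₀ : Finset (Fin p)) (hS₀ : S₀ = univ.filter fun j : Fin p => β₀ j ≠ 0)
    (s₀ : ℝ) (hs₀ : s₀ = (S₀.card : ℝ))
    (lam κ Clam Cl1 : ℝ) (hlam : 0 < lam) (hκ : 0 < κ)
    (hClam : 0 < Clam) (hCl1 : 0 < Cl1)
    (hl1 : ∑ j, (|a j - β₀ j| + |atk j|) ≤ Cl1 * lam * s₀)
    (hsignal : ∀ j ∈ S₀, κ * lam / Clam ≤ |β₀ j|)
    (hsupp : ∀ j : Fin p, a j ≠ 0 → W j ≠ 0)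
    (hneg : ((univ.filter fun j : Fin p => W j < 0).card : ℝ) ≤
      ((1 + Real.sqrt 5) / 2) * Cl1 * Clam * κ⁻¹ * s₀)
    (Shat : Finset (Fin p))
    (hShat : Shat = univ.filter fun j : Fin p => 0 < W j) :
    (1 - Cl1 * Clam * ((1 + Real.sqrt 5) / 2 + 1) * κ⁻¹) * s₀ ≤
      ((Shat ∩ S₀).card : ℝ) :=
  power_case2_lower_bound_general a atk β₀ W S₀ s₀ hs₀ lam κ Clam Cl1 hlam hκ hClam hl1 hsignal
    hsupp hneg Shat hShat
end

section
/- (Deterministic core of Theorem 2.) Let a, ã, β₀ : Fin p → ℝ, W_j = |a_j| − |ã_j|, S₀ = {j : β₀_j ≠ 0}, s₀ = |S₀| ≥ 1, and let q ∈ (0,1), λ, κ, C_λ, C_{ℓ1}, c > 0 with q·c·s₀ > 2. Assume: (i) the ℓ1-error bound Σ_{j=1}^p (|a_j − β₀_j| + |ã_j|) ≤ C_{ℓ1} λ s₀; (ii) min_{j ∈ S₀} |β₀_j| ≥ κλ/C_λ; (iii) the magnitudes of the nonzero W_j are pairwise distinct; (iv) the magnitudes of the nonzero entries of the combined vector (a₁,…,a_p,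 ã₁,…,ã_p) are pairwise distinct; (v) the knockoff+ threshold τ₊ exists, i.e. the set {t ∈ {|W_j| : W_j ≠ 0} : #{j : W_j ≤ −t} + 1 ≤ q · max(#{j : W_j ≥ t}, 1)} is nonempty with minimum τ₊; (vi) with Ŝ₀ = {j : W_j ≥ τ₊}, |Ŝ₀| ≥ c·s₀; (vii) C_{ℓ1} C_λ φ s₀ ≤ κ (q·c·s₀ − 2), where φ = (1+√5)/2 is the golden ratio. Then #(Ŝ₀ ∩ S₀) ≥ (1 − C_{ℓ1} C_λ (φ + 1) κ⁻¹) · s₀. -/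
open Finset

/-- deterministic core of Theorem 2: under the ℓ1-error bound, the
signal-strength condition, no ties in the magnitudes of the nonzero LCD statistics,
no ties in the magnitudes of the nonzero combined Lasso coefficients, existence with
minimality of the knockoff+ threshold `τ`, the size condition `|Ŝ₀| ≥ c s₀`, and
`C_{ℓ1} C_λ φ s₀ ≤ κ (q c s₀ - 2)` where `φ = (1+√5)/2` is the golden ratio, the
knockoff+ selected set `Ŝ₀ = {j : W j ≥ τ}` satisfies
`#(Ŝ₀ ∩ S₀) ≥ (1 - C_{ℓ1} C_λ (φ+1) κ⁻¹) s₀`. -/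
theorem coxknockoff_power_core
    {p : ℕ} (hp : 1 ≤ p) (a atk β₀ : Fin p → ℝ)
    (W : Fin p → ℝ) (hW : ∀ j, W j = |a j| - |atk j|)
    (S₀ : Finset (Fin p)) (hS₀ : S₀ = univ.filter fun j : Fin p => β₀ j ≠ 0)
    (s₀ : ℝ) (hs₀ : s₀ = (S₀.card : ℝ)) (hs₀1 : 1 ≤ s₀)
    (q lam κ Clam Cl1 c : ℝ)
    (hq0 : 0 < q) (hq1 : q < 1) (hlam : 0 < lam) (hκ : 0 < κ)
    (hClam : 0 < Clam) (hCl1 : 0 < Cl1) (hc : 0 < c)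
    (hqc : 2 < q * c * s₀)
    (hl1 : ∑ j, (|a j - β₀ j| + |atk j|) ≤ Cl1 * lam * s₀)
    (hsignal : ∀ j ∈ S₀, κ * lam / Clam ≤ |β₀ j|)
    (htiesW : ∀ j k : Fin p, W j ≠ 0 → W k ≠ 0 → |W j| = |W k| → j = k)
    (htiesb : ∀ j k : Fin p ⊕ Fin p, Sum.elim a atk j ≠ 0 → Sum.elim a atk k ≠ 0 →
      |Sum.elim a atk j| = |Sum.elim a atk k| → j = k)
    (τ : ℝ)
    (hmem : ∃ j : Fin p, W j ≠ 0 ∧ |W j| = τ)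
    (hτ : ((univ.filter fun j : Fin p => W j ≤ -τ).card : ℝ) + 1 ≤
      q * max ((univ.filter fun j : Fin p => τ ≤ W j).card : ℝ) 1)
    (hmin : ∀ t : ℝ, (∃ j : Fin p, W j ≠ 0 ∧ |W j| = t) →
      ((univ.filter fun j : Fin p => W j ≤ -t).card : ℝ) + 1 ≤
        q * max ((univ.filter fun j : Fin p => t ≤ W j).card : ℝ) 1 → τ ≤ t)
    (Shat : Finset (Fin p))
    (hShat : Shat = univ.filter fun j : Fin p => τ ≤ W j)
    (hsize : c * s₀ ≤ (Shat.card : ℝ))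
    (hvii : Cl1 * Clam * ((1 + Real.sqrt 5) / 2) * s₀ ≤ κ * (q * c * s₀ - 2)) :
    (1 - Cl1 * Clam * ((1 + Real.sqrt 5) / 2 + 1) * κ⁻¹) * s₀ ≤
      ((Shat ∩ S₀).card : ℝ) := by
  set φ : ℝ := (1 + Real.sqrt 5) / 2 with hφdef
  have h5 : Real.sqrt 5 * Real.sqrt 5 = 5 := Real.mul_self_sqrt (by norm_num)
  have hs5 : (2:ℝ) ≤ Real.sqrt 5 := by nlinarith [Real.sqrt_nonneg 5]
  have hφ1 : 1 < φ := by rw [hφdef]; linarith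
  have hφpos : 0 < φ := by linarith
  have hφsq : φ * φ = φ + 1 := by rw [hφdef]; linear_combination h5 / 4
  have hden : 0 < Clam * (φ + 1) := mul_pos hClam (by linarith)
  obtain ⟨jm, hjmne, hjmτ⟩ := hmem
  have hτpos : 0 < τ := by rw [← hjmτ]; exact abs_pos.mpr hjmne
  have hs₀pos : 0 < s₀ := lt_of_lt_of_le one_pos hs₀1
  have habs : ∀ j, |β₀ j| - W j ≤ |a j - β₀ j| + |atk j| := by
    intro j
    have h1 : |β₀ j| - |a j| ≤ |a j - β₀ j| := by
      rw [abs_sub_comm]; exact abs_sub_abs_le_abs_sub _ _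
    rw [hW j]; linarith
  have hmδ : ∀ (s : Finset (Fin p)) (δ : ℝ),
      (∀ j ∈ s, δ ≤ |a j - β₀ j| + |atk j|) → (s.card : ℝ) * δ ≤ Cl1 * lam * s₀ := by
    intro s δ h
    calc (s.card : ℝ) * δ = ∑ _j ∈ s, δ := by rw [Finset.sum_const, nsmul_eq_mul]
      _ ≤ ∑ j ∈ s, (|a j - β₀ j| + |atk j|) := Finset.sum_le_sum h
      _ ≤ ∑ j, (|a j - β₀ j| + |atk j|) :=
          Finset.sum_le_sum_of_subset_of_nonneg (Finset.subset_univ s)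
            (fun j _ _ => by positivity)
      _ ≤ Cl1 * lam * s₀ := hl1
  have hMW : ∀ j ∈ S₀ \ Shat, W j < τ := by
    intro j hj
    have hjn := (Finset.mem_sdiff.mp hj).2
    rw [hShat] at hjn
    by_contra h
    push_neg at h
    exact hjn (Finset.mem_filter.mpr ⟨Finset.mem_univ j, h⟩)
  have hMsig : ∀ j ∈ S₀ \ Shat, κ * lam / Clam ≤ |β₀ j| :=
    fun j hj => hsignal j (Finset.mem_sdiff.mp hj).1
  suffices hm : ((S₀ \ Shat).card : ℝ) ≤ Cl1 * Clam * (φ + 1) * κ⁻¹ * s₀ by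
    have h := Finset.card_inter_add_card_sdiff S₀ Shat
    have hcast : ((S₀ ∩ Shat).card : ℝ) + ((S₀ \ Shat).card : ℝ) = s₀ := by
      rw [hs₀]; exact_mod_cast h
    rw [Finset.inter_comm]
    linarith [hm, hcast]
  suffices hlow : ∀ j ∈ S₀ \ Shat, κ * lam / (Clam * (φ + 1)) ≤ |a j - β₀ j| + |atk j| by
    have hmb := hmδ _ _ hlow
    have h2 : ((S₀ \ Shat).card : ℝ) * (κ * lam) ≤ Cl1 * lam * s₀ * (Clam * (φ + 1)) := by
      have h := mul_le_mul_of_nonneg_right hmb hden.le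
      rwa [mul_assoc, div_mul_cancel₀ _ hden.ne'] at h
    have h3 : ((S₀ \ Shat).card : ℝ) * κ ≤ Cl1 * Clam * (φ + 1) * s₀ := by
      have h4 : (((S₀ \ Shat).card : ℝ) * κ) * lam ≤ (Cl1 * Clam * (φ + 1) * s₀) * lam := by
        linarith [h2]
      exact le_of_mul_le_mul_right h4 hlam
    rw [show Cl1 * Clam * (φ + 1) * κ⁻¹ * s₀ = Cl1 * Clam * (φ + 1) * s₀ / κ by
      rw [div_eq_mul_inv]; ring]
    rw [le_div_iff₀ hκ]
    exact h3
  by_cases hcor : ∀ j : Fin p, W j ≠ 0 → τ ≤ |W j|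
  · -- corner case: τ is the smallest nonzero magnitude
    intro j hj
    have hWj : W j < τ := hMW j hj
    have hW0 : W j ≤ 0 := by
      by_contra h
      push_neg at h
      have := hcor j (ne_of_gt h)
      rw [abs_of_pos h] at this
      linarith
    have h1 := habs j
    have h2 := hMsig j hj
    have h3 : κ * lam / (Clam * (φ + 1)) ≤ κ * lam / Clam :=
      div_le_div_of_nonneg_left (by positivity) hClam
        (le_mul_of_one_le_right hClam.le (by linarith : (1:ℝ) ≤ φ + 1))
    linarith
  · push_neg at hcor
    obtain ⟨j₀, hj₀ne, hj₀lt⟩ := hcor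
    obtain ⟨j', hj'G, hj'max⟩ := Finset.exists_max_image
      (univ.filter fun j : Fin p => W j ≠ 0 ∧ |W j| < τ) (fun j => |W j|)
      ⟨j₀, by simp [hj₀ne, hj₀lt]⟩
    simp only [Finset.mem_filter, Finset.mem_univ, true_and] at hj'G
    obtain ⟨hj'ne, hj'lt⟩ := hj'G
    have ht'pos : 0 < |W j'| := abs_pos.mpr hj'ne
    have hfail : ¬ (((univ.filter fun j : Fin p => W j ≤ -|W j'|).card : ℝ) + 1 ≤
        q * max ((univ.filter fun j : Fin p => |W j'| ≤ W j).card : ℝ) 1) := by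
      intro h
      exact absurd (hmin _ ⟨j', hj'ne, rfl⟩ h) (not_le.mpr hj'lt)
    have hgt := lt_of_not_ge hfail
    have hsub1 : Shat ⊆ univ.filter fun j : Fin p => |W j'| ≤ W j := by
      rw [hShat]
      intro j hj
      simp only [Finset.mem_filter, Finset.mem_univ, true_and] at hj ⊢
      linarith
    have hR1 : ((Shat.card : ℝ)) ≤ ((univ.filter fun j : Fin p => |W j'| ≤ W j).card : ℝ) := by
      exact_mod_cast Finset.card_le_card hsub1
    have hmaxge : q * (c * s₀) ≤
        q * max ((univ.filter fun j : Fin p => |W j'| ≤ W j).card : ℝ) 1 :=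
      mul_le_mul_of_nonneg_left
        (le_trans (le_trans hsize hR1) (le_max_left _ _)) hq0.le
    have hsub2 : (univ.filter fun j : Fin p => W j ≤ -|W j'|) ⊆
        insert j' (univ.filter fun j : Fin p => W j ≤ -τ) := by
      intro j hj
      simp only [Finset.mem_filter, Finset.mem_univ, true_and] at hj
      by_cases hjτ : W j ≤ -τ
      · exact Finset.mem_insert_of_mem (by simp [hjτ])
      · push_neg at hjτ
        have hWjneg : W j < 0 := lt_of_le_of_lt hj (by linarith)
        have hWjne : W j ≠ 0 := ne_of_lt hWjneg
        have habsj : |W j| < τ := by rw [abs_of_neg hWjneg]; linarith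
        have hle : |W j| ≤ |W j'| := hj'max j (by simp [hWjne, habsj])
        have hge : |W j'| ≤ |W j| := by rw [abs_of_neg hWjneg]; linarith
        have hjj : j = j' := htiesW j j' hWjne hj'ne (le_antisymm hle hge)
        simp [hjj]
    have hV1 : ((univ.filter fun j : Fin p => W j ≤ -|W j'|).card : ℝ) ≤
        ((univ.filter fun j : Fin p => W j ≤ -τ).card : ℝ) + 1 := by
      have := le_trans (Finset.card_le_card hsub2) (Finset.card_insert_le _ _)
      exact_mod_cast this
    have hVlb : q * c * s₀ - 2 < ((univ.filter fun j : Fin p => W j ≤ -τ).card : ℝ) := by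
      linarith [hmaxge, hV1, hgt]
    have hVτ : ((univ.filter fun j : Fin p => W j ≤ -τ).card : ℝ) * τ ≤ Cl1 * lam * s₀ := by
      apply hmδ
      intro j hj
      simp only [Finset.mem_filter, Finset.mem_univ, true_and] at hj
      have h2 : |a j| - |atk j| ≤ -τ := by rw [← hW j]; exact hj
      have h3 := abs_nonneg (a j)
      have h4 := abs_nonneg (a j - β₀ j)
      linarith
    have hτφ : τ * (Clam * φ) ≤ κ * lam := by
      have hDpos : (0:ℝ) < q * c * s₀ - 2 := by linarith
      have hA : τ * (q * c * s₀ - 2) ≤ Cl1 * lam * s₀ := by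
        have h := mul_le_mul_of_nonneg_left hVlb.le hτpos.le
        linarith [hVτ, h]
      have h5' := mul_le_mul_of_nonneg_right hA (le_of_lt (mul_pos hClam hφpos))
      have h6' := mul_le_mul_of_nonneg_right hvii hlam.le
      have h7 : (τ * (Clam * φ)) * (q * c * s₀ - 2) ≤ (κ * lam) * (q * c * s₀ - 2) := by
        linarith [h5', h6']
      exact le_of_mul_le_mul_right h7 hDpos
    intro j hj
    have hWj : W j < τ := hMW j hj
    have h2 := hMsig j hj
    have h1 := habs j
    have hkey : τ * (Clam * (φ + 1)) ≤ κ * lam * φ := by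
      have h8 : τ * (Clam * (φ + 1)) = (τ * (Clam * φ)) * φ := by
        linear_combination (τ * Clam) * hφsq.symm
      rw [h8]
      exact mul_le_mul_of_nonneg_right hτφ hφpos.le
    have hδτ : τ ≤ κ * lam / Clam - κ * lam / (Clam * (φ + 1)) := by
      have heq : κ * lam / Clam - κ * lam / (Clam * (φ + 1)) =
          κ * lam * φ / (Clam * (φ + 1)) := by
        field_simp
        ring
      rw [heq, le_div_iff₀ hden]
      exact hkey
    linarith
end

section
/- (Flip-sign property of the LCD statistics.) Let n, p ≥ 1, x, x̃ : Fin n → Fin p → ℝ, Y : Fin n → ℝ, δ : Fin n → ℝ, λ ∈ ℝ, S ⊆ Fin p, and define Q_{x,x̃}, the swapped design (x^S, x̃^S), and the coordinate swap (·)^S as in the penalized negative partial log-likelihood setup. Suppose (â, ᵃ̃) is the unique minimizer of Q_{x,x̃} (i.e., Q_{x,x̃}(â, ᵃ̃) ≤ Q_{x,x̃}(b, b̃) for all (b, b̃), with equality only at (â, ᵃ̃)) and (â′, ᵃ̃′) is the unique minimizer of Q_{x^S,x̃^S}. Then (â′, ᵃ̃′) = (â, ᵃ̃)^S, and consequently the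 LCD statistics W_j = |â_j| − |ᵃ̃_j| and W′_j = |â′_j| − |ᵃ̃′_j| satisfy W′_j = −W_j for j ∈ S and W′_j = W_j for j ∉ S. -/
open Finset

/-- The penalized negative partial log-likelihood of the Cox model with original design
`x`, knockoff design `xt`, observed times `Y`, censoring indicators `δ`, regularization
parameter `lam`, and coefficient pair `(b, bt)`. -/
noncomputable def penQ (n p : ℕ) (Y δ : Fin n → ℝ) (lam : ℝ)
    (x xt : Fin n → Fin p → ℝ) (b bt : Fin p → ℝ) : ℝ :=
  -(n : ℝ)⁻¹ * ∑ i, δ i * ((∑ j, (b j * x i j + bt j * xt i j)) -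
      Real.log (∑ k, (if Y i ≤ Y k then (1 : ℝ) else 0) *
        Real.exp (∑ j, (b j * x k j + bt j * xt k j))))
    + lam * ∑ j, (|b j| + |bt j|)

lemma swapQ {n p : ℕ} (Y δ : Fin n → ℝ) (lam : ℝ)
    (x xt : Fin n → Fin p → ℝ) (S : Finset (Fin p)) (b bt : Fin p → ℝ) :
    penQ n p Y δ lam (fun i j => if j ∈ S then xt i j else x i j)
      (fun i j => if j ∈ S then x i j else xt i j)
      (fun j => if j ∈ S then bt j else b j) (fun j => if j ∈ S then b j else bt j)
    = penQ n p Y δ lam x xt b bt := by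
  have hsum : ∀ k : Fin n,
      (∑ j, ((if j ∈ S then bt j else b j) * (if j ∈ S then xt k j else x k j)
        + (if j ∈ S then b j else bt j) * (if j ∈ S then x k j else xt k j)))
      = ∑ j, (b j * x k j + bt j * xt k j) := by
    intro k
    refine Finset.sum_congr rfl fun j _ => ?_
    by_cases h : j ∈ S <;> simp [h, add_comm]
  have hpen : (∑ j, (|if j ∈ S then bt j else b j| + |if j ∈ S then b j else bt j|))
      = ∑ j, (|b j| + |bt j|) := by
    refine Finset.sum_congr rfl fun j _ => ?_
    by_cases h : j ∈ S <;> simp [h, add_comm]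
  unfold penQ
  simp only [hsum, hpen]

/-- flip-sign property of the LCD statistics: if `(ahat, athat)` is the
unique minimizer of the objective on the original design `(x, xt)` and `(ahat', athat')`
is the unique minimizer of the objective on the design with columns in `S` swapped, then
`(ahat', athat')` equals `(ahat, athat)` with coordinates in `S` swapped, and consequently
the LCD statistics `W' j = |ahat' j| - |athat' j|` satisfy `W' j = -(W j)` for `j ∈ S`
and `W' j = W j` for `j ∉ S`, where `W j = |ahat j| - |athat j|`. -/
theorem lcd_flip_sign
    {n p : ℕ} (hn : 1 ≤ n) (hp : 1 ≤ p)
    (x xt : Fin n → Fin p → ℝ) (Y δ : Fin n → ℝ) (lam : ℝ)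
    (S : Finset (Fin p))
    (ahat athat ahat' athat' : Fin p → ℝ)
    (hmin : ∀ b bt : Fin p → ℝ,
      penQ n p Y δ lam x xt ahat athat ≤ penQ n p Y δ lam x xt b bt)
    (huniq : ∀ b bt : Fin p → ℝ,
      penQ n p Y δ lam x xt b bt = penQ n p Y δ lam x xt ahat athat →
        b = ahat ∧ bt = athat)
    (hmin' : ∀ b bt : Fin p → ℝ,
      penQ n p Y δ lam (fun i j => if j ∈ S then xt i j else x i j)
          (fun i j => if j ∈ S then x i j else xt i j) ahat' athat' ≤
        penQ n p Y δ lam (fun i j => if j ∈ S then xt i j else x i j)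
          (fun i j => if j ∈ S then x i j else xt i j) b bt)
    (huniq' : ∀ b bt : Fin p → ℝ,
      penQ n p Y δ lam (fun i j => if j ∈ S then xt i j else x i j)
          (fun i j => if j ∈ S then x i j else xt i j) b bt =
        penQ n p Y δ lam (fun i j => if j ∈ S then xt i j else x i j)
          (fun i j => if j ∈ S then x i j else xt i j) ahat' athat' →
        b = ahat' ∧ bt = athat') :
    (ahat' = fun j => if j ∈ S then athat j else ahat j) ∧
    (athat' = fun j => if j ∈ S then ahat j else athat j) ∧
    (∀ j ∈ S, |ahat' j| - |athat' j| = -(|ahat j| - |athat j|)) ∧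
    (∀ j ∉ S, |ahat' j| - |athat' j| = |ahat j| - |athat j|) := by
  set xS : Fin n → Fin p → ℝ := fun i j => if j ∈ S then xt i j else x i j with hxS
  set xtS : Fin n → Fin p → ℝ := fun i j => if j ∈ S then x i j else xt i j with hxtS
  set aS : Fin p → ℝ := fun j => if j ∈ S then athat j else ahat j with haS
  set atS : Fin p → ℝ := fun j => if j ∈ S then ahat j else athat j with hatS
  have key : penQ n p Y δ lam xS xtS aS atS = penQ n p Y δ lam x xt ahat athat :=
    swapQ Y δ lam x xt S ahat athat
  have key' : penQ n p Y δ lam xS xtS ahat' athat' =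
      penQ n p Y δ lam x xt (fun j => if j ∈ S then athat' j else ahat' j)
        (fun j => if j ∈ S then ahat' j else athat' j) := by
    have := swapQ Y δ lam x xt S (fun j => if j ∈ S then athat' j else ahat' j)
      (fun j => if j ∈ S then ahat' j else athat' j)
    rw [← this]
    congr 1 <;> funext j <;> by_cases h : j ∈ S <;> simp [h]
  have heq : penQ n p Y δ lam xS xtS aS atS = penQ n p Y δ lam xS xtS ahat' athat' := by
    apply le_antisymm
    · rw [key, key']
      exact hmin _ _
    · exact hmin' aS atS
  obtain ⟨h1, h2⟩ := huniq' aS atS heq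
  refine ⟨h1.symm, h2.symm, ?_, ?_⟩
  · intro j hj
    rw [← h1, ← h2, haS, hatS]
    simp only [if_pos hj]
    ring
  · intro j hj
    rw [← h1, ← h2, haS, hatS]
    simp [hj]
end
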